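/- arXiv:2506.13885 — 2 statements merged into one kernel-verified Lean document; each statement's English description precedes it below -/
import Mathlib

section
/- Let m be a positive integer and let σ, τ be two permutations of {1,...,m}. Then the intersection of the simplices Δ_σ = {x ∈ [0,1]^m : x_{σ(1)} ≥ ... ≥ x_{σ(m)}} and Δ_τ = {x ∈ [0,1]^m : x_{τ(1)} ≥ ... ≥ x_{τ(m)}} equals the convex hull of the common vertices of Δ_σ and Δ_τ, where the vertices of Δ_σ are the points e_{σ(1)} + ... + e_{σ(i)} for i = 0,...,m. -/
/-!
Write `g = (1, x_{σ(1)}, …, x_{σ(m)}, 0)`; for `x ∈ Δ_σ` this sequence is decreasing and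
`x = ∑ᵢ (gᵢ - gᵢ₊₁) p_i^σ` is a convex combination of the vertices of `Δ_σ`. A vertex `p_i^σ` of
positive weight `gᵢ > gᵢ₊₁` is the indicator of the superlevel set `{j | x_j > gᵢ₊₁}`. If `x` also
lies in `Δ_τ`, every superlevel set of `x` is an initial segment of `τ`, so `p_i^σ` is a vertex of
`Δ_τ` as well. The reverse inclusion is the convexity of `Δ_σ ∩ Δ_τ`.
-/

open Finset

variable {𝕜 : Type*} {m : ℕ}

variable (𝕜) in
def orderSimplex [Zero 𝕜] [One 𝕜] [Preorder 𝕜] (ρ : Equiv.Perm (Fin m)) : Set (Fin m → 𝕜) :=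
  {x | (∀ j, x j ∈ Set.Icc (0 : 𝕜) 1) ∧ Antitone (x ∘ ρ)}

variable (𝕜) in
/-- `p_i^ρ = e_{ρ 0} + ⋯ + e_{ρ (i - 1)}`, with `Fin m` indexing from `0`. -/
def orderSimplexVertex [Zero 𝕜] [One 𝕜] (ρ : Equiv.Perm (Fin m)) (i : Fin (m + 1)) :
    Fin m → 𝕜 :=
  fun j => if (ρ.symm j : ℕ) < i then 1 else 0

theorem exists_fin_lt_iff_of_antitone {α : Type*} [LinearOrder α] {f : Fin m → α}
    (hf : Antitone f) (c : α) : ∃ k : Fin (m + 1), ∀ a : Fin m, (a : ℕ) < k ↔ c < f a := by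
  have hlow : IsLowerSet {a | c < f a} := fun a b hba ha => ha.trans_le (hf hba)
  rcases hlow.eq_univ_or_Iio with h | ⟨k, h⟩
  · exact ⟨Fin.last m, fun a => iff_of_true a.isLt (Set.eq_univ_iff_forall.1 h a)⟩
  · refine ⟨k.castSucc, fun a => ?_⟩
    rw [Fin.val_castSucc, ← Fin.lt_def, ← Set.mem_Iio, ← h, Set.mem_ofPred_eq]

def paddedCoord [Zero 𝕜] [One 𝕜] (x : Fin m → 𝕜) (ρ : Equiv.Perm (Fin m)) : ℕ → 𝕜
  | 0 => 1
  | k + 1 => if h : k < m then x (ρ ⟨k, h⟩) else 0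

section

variable [Zero 𝕜] [One 𝕜] {x : Fin m → 𝕜} {ρ : Equiv.Perm (Fin m)}

theorem paddedCoord_symm_add_one (j : Fin m) : paddedCoord x ρ ((ρ.symm j : ℕ) + 1) = x j := by
  simp [paddedCoord]

theorem paddedCoord_eq_zero_of_lt {k : ℕ} (hk : m < k) : paddedCoord x ρ k = 0 := by
  obtain ⟨k, rfl⟩ := Nat.exists_eq_add_one_of_ne_zero (by omega : k ≠ 0)
  simp [paddedCoord, show ¬k < m by omega]

variable [LinearOrder 𝕜]

theorem exists_orderSimplexVertex_eq_indicator (hx : Antitone (x ∘ ρ)) (c : 𝕜) :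
    ∃ k, orderSimplexVertex 𝕜 ρ k = fun j => if c < x j then 1 else 0 := by
  obtain ⟨k, hk⟩ := exists_fin_lt_iff_of_antitone hx c
  refine ⟨k, funext fun j => ?_⟩
  simp only [orderSimplexVertex, hk, Function.comp_apply, Equiv.apply_symm_apply]

theorem orderSimplexVertex_eq_indicator_of_lt (hg : Antitone (paddedCoord x ρ)) {i : Fin (m + 1)}
    (hi : paddedCoord x ρ (i + 1) < paddedCoord x ρ i) :
    orderSimplexVertex 𝕜 ρ i = fun j => if paddedCoord x ρ (i + 1) < x j then 1 else 0 := by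
  funext j
  rw [orderSimplexVertex, ← paddedCoord_symm_add_one (x := x) j]
  by_cases hj : (ρ.symm j : ℕ) < i
  · rw [if_pos hj, if_pos (hi.trans_le (hg (Nat.succ_le_of_lt hj)))]
  · rw [if_neg hj, if_neg (not_lt.2 (hg (by omega)))]

end

section Ring

variable [Ring 𝕜]

theorem sum_paddedCoord_sub_add_one (x : Fin m → 𝕜) (ρ : Equiv.Perm (Fin m)) :
    ∑ i : Fin (m + 1), (paddedCoord x ρ i - paddedCoord x ρ (i + 1)) = 1 := by
  rw [Fin.sum_univ_eq_sum_range (fun k => paddedCoord x ρ k - paddedCoord x ρ (k + 1)),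
    sum_range_sub', paddedCoord_eq_zero_of_lt m.lt_succ_self, sub_zero, paddedCoord]

theorem sum_smul_orderSimplexVertex (x : Fin m → 𝕜) (ρ : Equiv.Perm (Fin m)) :
    ∑ i : Fin (m + 1), (paddedCoord x ρ i - paddedCoord x ρ (i + 1)) • orderSimplexVertex 𝕜 ρ i
      = x := by
  funext j
  set g := paddedCoord x ρ
  set s := (ρ.symm j : ℕ)
  -- truncating `g` below at `s + 1` turns the sum into a telescoping one
  set G : ℕ → 𝕜 := fun k => g (max k (s + 1))
  have hterm (k : ℕ) : (if s < k then g k - g (k + 1) else 0) = G k - G (k + 1) := by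
    split_ifs with h
    · simp only [G, max_eq_left (Nat.succ_le_of_lt h), max_eq_left (by omega : s + 1 ≤ k + 1)]
    · simp only [G, max_eq_right (by omega : k ≤ s + 1), max_eq_right (by omega : k + 1 ≤ s + 1),
        sub_self]
  calc (∑ i : Fin (m + 1), (g i - g (i + 1)) • orderSimplexVertex 𝕜 ρ i) j
      = ∑ i : Fin (m + 1), if s < i then g i - g (i + 1) else 0 := by
        simp [Finset.sum_apply, orderSimplexVertex, s]
    _ = ∑ k ∈ range (m + 1), (G k - G (k + 1)) := by
        rw [Fin.sum_univ_eq_sum_range (fun k => if s < k then g k - g (k + 1) else 0)]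
        exact sum_congr rfl fun k _ => hterm k
    _ = x j := by
        rw [sum_range_sub']
        simp only [G, zero_max, max_eq_left (by omega : s + 1 ≤ m + 1), g, s,
          paddedCoord_symm_add_one, paddedCoord_eq_zero_of_lt m.lt_succ_self, sub_zero]

section Ordered

variable [LinearOrder 𝕜] [IsOrderedRing 𝕜]

theorem convex_orderSimplex (ρ : Equiv.Perm (Fin m)) : Convex 𝕜 (orderSimplex 𝕜 ρ) := by
  rintro y ⟨hy01, hy⟩ z ⟨hz01, hz⟩ a b ha hb hab
  refine ⟨fun j => convex_Icc 0 1 (hy01 j) (hz01 j) ha hb hab, fun u v huv => ?_⟩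
  simp only [Function.comp_apply, Pi.add_apply, Pi.smul_apply, smul_eq_mul]
  gcongr
  exacts [hy huv, hz huv]

theorem orderSimplexVertex_mem (ρ : Equiv.Perm (Fin m)) (i : Fin (m + 1)) :
    orderSimplexVertex 𝕜 ρ i ∈ orderSimplex 𝕜 ρ := by
  refine ⟨fun j => ?_, fun a b hab => ?_⟩
  · unfold orderSimplexVertex; split_ifs <;> simp
  · have : (a : ℕ) ≤ b := hab
    simp only [orderSimplexVertex, Function.comp_apply, Equiv.symm_apply_apply]
    split_ifs
    all_goals first | rfl | omega | exact zero_le_one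

theorem antitone_paddedCoord {x : Fin m → 𝕜} {ρ : Equiv.Perm (Fin m)}
    (hx : x ∈ orderSimplex 𝕜 ρ) : Antitone (paddedCoord x ρ) := by
  refine antitone_nat_of_succ_le fun k => ?_
  cases k with
  | zero => simp only [paddedCoord]; split_ifs <;> simp [(hx.1 _).2]
  | succ k =>
    simp only [paddedCoord]
    split_ifs
    · exact hx.2 (Fin.mk_le_mk.2 k.le_succ)
    · omega
    · exact (hx.1 _).1
    · rfl

end Ordered

end Ring

section Field

variable [Field 𝕜] [LinearOrder 𝕜] [IsStrictOrderedRing 𝕜]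

theorem inter_orderSimplex_subset_convexHull (σ τ : Equiv.Perm (Fin m)) :
    orderSimplex 𝕜 σ ∩ orderSimplex 𝕜 τ ⊆
      convexHull 𝕜 (Set.range (orderSimplexVertex 𝕜 σ) ∩ Set.range (orderSimplexVertex 𝕜 τ)) := by
  rintro x ⟨hxσ, hxτ⟩
  set g := paddedCoord x σ
  have hg : Antitone g := antitone_paddedCoord hxσ
  have hg_le (i : Fin (m + 1)) : g (i + 1) ≤ g i := hg (Nat.le_succ _)
  have hcommon (i : Fin (m + 1)) (hi : g i - g (i + 1) ≠ 0) :
      orderSimplexVertex 𝕜 σ i ∈ Set.range (orderSimplexVertex 𝕜 τ) := by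
    obtain ⟨k, hk⟩ := exists_orderSimplexVertex_eq_indicator hxτ.2 (g (i + 1))
    exact ⟨k, hk.trans (orderSimplexVertex_eq_indicator_of_lt hg
      ((hg_le i).lt_of_ne (sub_ne_zero.1 hi).symm)).symm⟩
  rw [← sum_smul_orderSimplexVertex x σ, ← finsum_eq_sum_of_fintype]
  apply (convex_convexHull 𝕜 _).finsum_mem
  · exact fun i => sub_nonneg.2 (hg_le i)
  · rw [finsum_eq_sum_of_fintype, sum_paddedCoord_sub_add_one]
  · exact fun i hi => subset_convexHull 𝕜 _ ⟨⟨i, rfl⟩, hcommon i hi⟩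

theorem inter_orderSimplex_eq_convexHull (σ τ : Equiv.Perm (Fin m)) :
    orderSimplex 𝕜 σ ∩ orderSimplex 𝕜 τ =
      convexHull 𝕜 (Set.range (orderSimplexVertex 𝕜 σ) ∩ Set.range (orderSimplexVertex 𝕜 τ)) := by
  refine (inter_orderSimplex_subset_convexHull σ τ).antisymm
    (convexHull_min ?_ ((convex_orderSimplex σ).inter (convex_orderSimplex τ)))
  rintro _ ⟨⟨i, rfl⟩, ⟨k, hk⟩⟩
  exact ⟨orderSimplexVertex_mem σ i, hk ▸ orderSimplexVertex_mem τ k⟩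

end Field

theorem stmt3_general (m : ℕ) (σ τ : Equiv.Perm (Fin m))
    (p : Equiv.Perm (Fin m) → Fin (m + 1) → Fin m → ℝ)
    (hp : ∀ ρ i j, p ρ i j = if (ρ.symm j : ℕ) < (i : ℕ) then 1 else 0)
    (Δ : Equiv.Perm (Fin m) → Set (Fin m → ℝ))
    (hΔ : ∀ ρ, Δ ρ = {x : Fin m → ℝ | (∀ j, x j ∈ Set.Icc (0 : ℝ) 1) ∧
      ∀ a b : Fin m, a ≤ b → x (ρ b) ≤ x (ρ a)}) :
    Δ σ ∩ Δ τ = convexHull ℝ (Set.range (p σ) ∩ Set.range (p τ)) := by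
  obtain rfl : p = orderSimplexVertex ℝ := funext fun ρ => funext fun i => funext (hp ρ i)
  obtain rfl : Δ = orderSimplex ℝ := funext hΔ
  exact inter_orderSimplex_eq_convexHull σ τ

/-- For permutations `σ, τ` of `{1,...,m}`, the intersection of the simplices
`Δ_σ` and `Δ_τ` equals the convex hull of their common vertices, the vertices of `Δ_σ`
being the points `p_i^σ = e_{σ(1)} + ... + e_{σ(i)}`, `i = 0,...,m`. -/
theorem stmt3 (m : ℕ) (hm : 0 < m) (σ τ : Equiv.Perm (Fin m))
    (p : Equiv.Perm (Fin m) → Fin (m + 1) → Fin m → ℝ)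
    (hp : ∀ ρ i j, p ρ i j = if (ρ.symm j : ℕ) < (i : ℕ) then 1 else 0)
    (Δ : Equiv.Perm (Fin m) → Set (Fin m → ℝ))
    (hΔ : ∀ ρ, Δ ρ = {x : Fin m → ℝ | (∀ j, x j ∈ Set.Icc (0 : ℝ) 1) ∧
      ∀ a b : Fin m, a ≤ b → x (ρ b) ≤ x (ρ a)}) :
    Δ σ ∩ Δ τ = convexHull ℝ (Set.range (p σ) ∩ Set.range (p τ)) :=
  stmt3_general m σ τ p hp Δ hΔ
end

section
/- Let m ≥ 1 and let φ : [0,1]^m → [0,1]^m be an isometry (for the Euclidean metric) mapping the pair of points {(0,...,0), (1,...,1)} onto itself. Then φ is either of the form (x_1,...,x_m) ↦ (x_{τ(1)},...,x_{τ(m)}) for some permutation τ, or of the form (x_1,...,x_m) ↦ (1 - x_{τ(1)}, ..., 1 - x_{τ(m)}) for some permutation τ. -/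
/-!
An isometry of the cube fixing the corner `0` preserves inner products, and fixing also the
corner `𝟙` it preserves the coordinate sum `⟪x, 𝟙⟫`. Hence it sends every vertex `eᵢ` to a point
of the cube with `∑ yⱼ = ∑ yⱼ² = 1`, which must be a vertex `e_{σ i}`, and then
`φ(x)_{σ i} = ⟪φ x, φ eᵢ⟫ = ⟪x, eᵢ⟫ = xᵢ`. If instead `φ` swaps the two corners, composing with
the point reflection `x ↦ 𝟙 - x` of the cube reduces to the first case.
-/

open RealInnerProductSpace Finset

theorem Isometry.inner_sub_map_eq {E F : Type*} [NormedAddCommGroup E] [InnerProductSpace ℝ E]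
    [NormedAddCommGroup F] [InnerProductSpace ℝ F] {s : Set E} {f : s → F} (hf : Isometry f)
    (p x y : s) : ⟪f x - f p, f y - f p⟫ = ⟪(x : E) - p, (y : E) - p⟫ := by
  have hnorm : ∀ a b : s, ‖f a - f b‖ = ‖(a : E) - b‖ := fun a b => by
    rw [← dist_eq_norm, ← dist_eq_norm, hf.dist_eq, Subtype.dist_eq]
  have hf_polar := norm_sub_sq_real (f x - f p) (f y - f p)
  have h_polar := norm_sub_sq_real ((x : E) - p) ((y : E) - p)
  rw [sub_sub_sub_cancel_right] at hf_polar h_polar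
  rw [hnorm, hnorm, hnorm] at hf_polar
  linarith

variable {ι : Type*}

def unitCube (ι : Type*) : Set (EuclideanSpace ℝ ι) :=
  {x | ∀ j, x j ∈ Set.Icc (0 : ℝ) 1}

theorem single_one_mem_unitCube [DecidableEq ι] (i : ι) :
    EuclideanSpace.single i (1 : ℝ) ∈ unitCube ι := fun j => by
  by_cases h : j = i <;> simp [h]

theorem exists_eq_single_of_mem_unitCube [Fintype ι] [DecidableEq ι] {y : EuclideanSpace ℝ ι}
    (hy : y ∈ unitCube ι) (hsum : ∑ j, y j = 1) (hsq : ∑ j, y j ^ 2 = 1) :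
    ∃ k, y = EuclideanSpace.single k 1 := by
  have hprod : ∀ j, y j * (1 - y j) = 0 := by
    have hnonneg : ∀ j ∈ univ, 0 ≤ y j * (1 - y j) := fun j _ =>
      mul_nonneg (hy j).1 (sub_nonneg.2 (hy j).2)
    have hzero : ∑ j, y j * (1 - y j) = 0 := by
      simp only [mul_sub, mul_one, ← sq, sum_sub_distrib, hsum, hsq, sub_self]
    exact fun j => (sum_eq_zero_iff_of_nonneg hnonneg).1 hzero j (mem_univ j)
  obtain ⟨k, -, hk⟩ := exists_ne_zero_of_sum_ne_zero (hsum ▸ one_ne_zero : ∑ j, y j ≠ 0)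
  have hk1 : y k = 1 := by
    have := (mul_eq_zero.1 (hprod k)).resolve_left hk
    linarith
  refine ⟨k, ?_⟩
  ext j
  rw [PiLp.single_apply]
  split_ifs with hjk
  · rw [hjk, hk1]
  · have := add_le_sum (fun i _ => (hy i).1) (mem_univ j) (mem_univ k) hjk
    linarith [(hy j).1]

namespace unitCube

def reflect (x : unitCube ι) : unitCube ι :=
  ⟨(WithLp.toLp 2 (fun _ => 1) : EuclideanSpace ℝ ι) - x, fun j => by
    have := x.2 j
    simp only [Set.mem_Icc, PiLp.sub_apply] at this ⊢
    constructor <;> linarith⟩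

@[simp]
theorem reflect_apply (x : unitCube ι) (j : ι) :
    (reflect x : EuclideanSpace ℝ ι) j = 1 - (x : EuclideanSpace ℝ ι) j :=
  rfl

theorem isometry_reflect [Fintype ι] : Isometry (reflect (ι := ι)) :=
  Isometry.of_dist_eq fun x y => by
    rw [Subtype.dist_eq, Subtype.dist_eq]
    exact dist_sub_left _ _ _

end unitCube

theorem exists_perm_of_isometry_of_fixed_corners [Fintype ι] {φ : unitCube ι → unitCube ι}
    (hφ : Isometry φ) {z o : unitCube ι} (hz : ∀ j, (z : EuclideanSpace ℝ ι) j = 0)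
    (ho : ∀ j, (o : EuclideanSpace ℝ ι) j = 1) (hφz : φ z = z) (hφo : φ o = o) :
    ∃ τ : Equiv.Perm ι, ∀ x j,
      (φ x : EuclideanSpace ℝ ι) j = (x : EuclideanSpace ℝ ι) (τ j) := by
  classical
  have hz0 : (z : EuclideanSpace ℝ ι) = 0 := by ext j; exact hz j
  have hinner : ∀ x y, ⟪(φ x : EuclideanSpace ℝ ι), φ y⟫ = ⟪(x : EuclideanSpace ℝ ι), y⟫ :=
    fun x y => by simpa [hφz, hz0] using (isometry_subtype_coe.comp hφ).inner_sub_map_eq z x y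
  let e : ι → unitCube ι := fun i => ⟨EuclideanSpace.single i 1, single_one_mem_unitCube i⟩
  have hvertex : ∀ i, ∃ k, (φ (e i) : EuclideanSpace ℝ ι) = EuclideanSpace.single k 1 := by
    intro i
    apply exists_eq_single_of_mem_unitCube (φ (e i)).2
    · simpa [hφo, PiLp.inner_apply, ho, e] using hinner (e i) o
    · have := hinner (e i) (e i)
      rw [real_inner_self_eq_norm_sq, real_inner_self_eq_norm_sq,
        EuclideanSpace.real_norm_sq_eq, EuclideanSpace.real_norm_sq_eq] at this
      simpa [e] using this
  choose σ hσ using hvertex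
  have hcoord : ∀ x i, (φ x : EuclideanSpace ℝ ι) (σ i) = (x : EuclideanSpace ℝ ι) i :=
    fun x i => by
      simpa [hσ, e, EuclideanSpace.inner_single_right] using hinner x (e i)
  have hσ_inj : σ.Injective := fun i k h => by
    have := (hcoord (e i) i).symm.trans ((congrArg _ h).trans (hcoord (e i) k))
    simpa [e, eq_comm] using this
  let τ := Equiv.ofBijective σ (Finite.injective_iff_bijective.1 hσ_inj)
  refine ⟨τ.symm, fun x j => ?_⟩
  rw [← hcoord x (τ.symm j)]
  exact congrArg _ (τ.apply_symm_apply j).symm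

theorem stmt17_general (m : ℕ)
    (C : Set (EuclideanSpace ℝ (Fin m)))
    (hC : C = {x | ∀ j, x j ∈ Set.Icc (0 : ℝ) 1})
    (φ : C → C) (hφ : Isometry φ)
    (z o : C)
    (hz : ∀ j, (z : EuclideanSpace ℝ (Fin m)) j = 0)
    (ho : ∀ j, (o : EuclideanSpace ℝ (Fin m)) j = 1)
    (hends : ({φ z, φ o} : Set C) = {z, o}) :
    ∃ τ : Equiv.Perm (Fin m),
      (∀ (x : C) (j : Fin m),
          (φ x : EuclideanSpace ℝ (Fin m)) j = (x : EuclideanSpace ℝ (Fin m)) (τ j)) ∨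
      (∀ (x : C) (j : Fin m),
          (φ x : EuclideanSpace ℝ (Fin m)) j = 1 - (x : EuclideanSpace ℝ (Fin m)) (τ j)) := by
  obtain rfl : C = unitCube (Fin m) := hC
  obtain ⟨hφz, hφo⟩ | ⟨hφz, hφo⟩ := Set.pair_eq_pair_iff.1 hends
  · obtain ⟨τ, hτ⟩ := exists_perm_of_isometry_of_fixed_corners hφ hz ho hφz hφo
    exact ⟨τ, Or.inl hτ⟩
  · have hreflect_o : unitCube.reflect o = z := Subtype.ext (by ext j; simp [ho, hz])
    have hreflect_z : unitCube.reflect z = o := Subtype.ext (by ext j; simp [ho, hz])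
    obtain ⟨τ, hτ⟩ := exists_perm_of_isometry_of_fixed_corners (unitCube.isometry_reflect.comp hφ)
      hz ho (by simp [hφz, hreflect_o]) (by simp [hφo, hreflect_z])
    refine ⟨τ, Or.inr fun x j => ?_⟩
    have := hτ x j
    simp only [Function.comp_apply, unitCube.reflect_apply] at this
    linarith

/-- Let `φ` be an isometry of the unit cube `[0,1]^m` (Euclidean metric)
mapping the pair of opposite corners `{(0,...,0), (1,...,1)}` onto itself.  Then `φ` is
either `x ↦ (x_{τ(1)},...,x_{τ(m)})` or `x ↦ (1-x_{τ(1)},...,1-x_{τ(m)})` for some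
permutation `τ` of the coordinates. -/
theorem stmt17 (m : ℕ) (hm : 1 ≤ m)
    (C : Set (EuclideanSpace ℝ (Fin m)))
    (hC : C = {x | ∀ j, x j ∈ Set.Icc (0 : ℝ) 1})
    (φ : C → C) (hφ : Isometry φ)
    (z o : C)
    (hz : ∀ j, (z : EuclideanSpace ℝ (Fin m)) j = 0)
    (ho : ∀ j, (o : EuclideanSpace ℝ (Fin m)) j = 1)
    (hends : ({φ z, φ o} : Set C) = {z, o}) :
    ∃ τ : Equiv.Perm (Fin m),
      (∀ (x : C) (j : Fin m),
          (φ x : EuclideanSpace ℝ (Fin m)) j = (x : EuclideanSpace ℝ (Fin m)) (τ j)) ∨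
      (∀ (x : C) (j : Fin m),
          (φ x : EuclideanSpace ℝ (Fin m)) j = 1 - (x : EuclideanSpace ℝ (Fin m)) (τ j)) :=
  stmt17_general m C hC φ hφ z o hz ho hends
end
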